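/- arXiv:2404.00521 — 2 statements merged into one kernel-verified Lean document; each statement's English description precedes it below -/
import Mathlib

section
/- Let H be an even, uniformly bounded function class and d_H the associated IPM. Let μ be a target measure, G a family of measures, μ̂_n an empirical measure of μ, ν_n a measure with d_H(μ̂_n, ν_n) ≤ inf_{ν∈G} d_H(μ̂_n, ν) + ε, ν_n* achieving inf_{ν∈G} d_H(μ̂_n, ν), and ν̂_n an empirical measure of ν_n used during training such that d_H(μ̂_n, ν_n) ≤ d_H(μ̂_n, ν̂_n). Then the generalization error ε_gan := d_H(μ, ν_n) − inf_{ν∈G} d_H(μ, ν) satisfies ε_gan ≤ 2 d_H(μ, μ̂_n) + 2 d_H(ν_n*, ν̂_n) + ε. -/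
open MeasureTheory

/-- The integral probability metric `d_H(μ,ν) = sup_{h∈H} |E_μ[h] - E_ν[h]|`
(for an even class `H` this equals `sup_{h∈H} (E_μ[h] - E_ν[h])`). -/
noncomputable def dIPM {X : Type*} [MeasurableSpace X] (H : Set (X → ℝ))
    (μ ν : Measure X) : ℝ :=
  sSup ((fun h => |(∫ x, h x ∂μ) - ∫ x, h x ∂ν|) '' H)

section aux
variable {X : Type*} [MeasurableSpace X] {H : Set (X → ℝ)} {Δ : ℝ}

lemma int_abs_le (hbdd : ∀ h ∈ H, ∀ x, |h x| ≤ Δ) {h : X → ℝ} (hh : h ∈ H)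
    (μ : Measure X) [IsProbabilityMeasure μ] : |∫ x, h x ∂μ| ≤ Δ := by
  have := norm_integral_le_of_norm_le_const (μ := μ) (f := h) (C := Δ)
    (Filter.Eventually.of_forall fun x => by simpa using hbdd h hh x)
  simpa using this

lemma dIPM_bdd (hbdd : ∀ h ∈ H, ∀ x, |h x| ≤ Δ)
    (μ ν : Measure X) [IsProbabilityMeasure μ] [IsProbabilityMeasure ν] :
    ∀ b ∈ (fun h => |(∫ x, h x ∂μ) - ∫ x, h x ∂ν|) '' H, b ≤ 2 * Δ := by
  rintro b ⟨h, hh, rfl⟩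
  have h1 := int_abs_le hbdd hh μ
  have h2 := int_abs_le hbdd hh ν
  have := abs_sub (∫ x, h x ∂μ) (∫ x, h x ∂ν)
  linarith

lemma dIPM_bddAbove (hbdd : ∀ h ∈ H, ∀ x, |h x| ≤ Δ)
    (μ ν : Measure X) [IsProbabilityMeasure μ] [IsProbabilityMeasure ν] :
    BddAbove ((fun h => |(∫ x, h x ∂μ) - ∫ x, h x ∂ν|) '' H) :=
  ⟨2 * Δ, fun b hb => dIPM_bdd hbdd μ ν b hb⟩

lemma dIPM_nonneg (hne : H.Nonempty) (hbdd : ∀ h ∈ H, ∀ x, |h x| ≤ Δ)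
    (μ ν : Measure X) [IsProbabilityMeasure μ] [IsProbabilityMeasure ν] :
    0 ≤ dIPM H μ ν := by
  obtain ⟨h, hh⟩ := hne
  exact le_trans (abs_nonneg _)
    (le_csSup (dIPM_bddAbove hbdd μ ν) ⟨h, hh, rfl⟩)

lemma dIPM_symm (μ ν : Measure X) : dIPM H μ ν = dIPM H ν μ := by
  unfold dIPM
  congr 1
  ext b
  constructor <;> rintro ⟨h, hh, rfl⟩ <;> exact ⟨h, hh, (abs_sub_comm _ _)⟩

lemma dIPM_triangle (hne : H.Nonempty) (hbdd : ∀ h ∈ H, ∀ x, |h x| ≤ Δ)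
    (μ ρ ν : Measure X) [IsProbabilityMeasure μ] [IsProbabilityMeasure ρ]
    [IsProbabilityMeasure ν] :
    dIPM H μ ν ≤ dIPM H μ ρ + dIPM H ρ ν := by
  apply csSup_le (hne.image _)
  rintro b ⟨h, hh, rfl⟩
  have h1 : |(∫ x, h x ∂μ) - ∫ x, h x ∂ρ| ≤ dIPM H μ ρ :=
    le_csSup (dIPM_bddAbove hbdd μ ρ) ⟨h, hh, rfl⟩
  have h2 : |(∫ x, h x ∂ρ) - ∫ x, h x ∂ν| ≤ dIPM H ρ ν :=
    le_csSup (dIPM_bddAbove hbdd ρ ν) ⟨h, hh, rfl⟩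
  have := abs_sub_le (∫ x, h x ∂μ) (∫ x, h x ∂ρ) (∫ x, h x ∂ν)
  linarith

end aux

/-- GAN generalization error bound:
`ε_gan := d_H(μ, ν_n) - inf_{ν∈G} d_H(μ, ν) ≤ 2 d_H(μ, μ̂_n) + 2 d_H(ν_n*, ν̂_n) + ε`. -/
theorem stmt_1 {X : Type*} [MeasurableSpace X] (H : Set (X → ℝ)) (Δ : ℝ)
    (hne : H.Nonempty)
    (heven : ∀ h ∈ H, (fun x => -h x) ∈ H)
    (hbdd : ∀ h ∈ H, ∀ x, |h x| ≤ Δ)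
    (hmeas : ∀ h ∈ H, Measurable h)
    (G : Set (Measure X)) (hGne : G.Nonempty)
    (μ μhat νn νnstar νhat : Measure X)
    [IsProbabilityMeasure μ] [IsProbabilityMeasure μhat] [IsProbabilityMeasure νn]
    [IsProbabilityMeasure νnstar] [IsProbabilityMeasure νhat]
    (hGprob : ∀ ν ∈ G, IsProbabilityMeasure ν)
    (ε : ℝ) (hε : 0 ≤ ε)
    -- `ν_n` minimizes `d_H(μ̂_n, ·)` over `G` up to precision `ε`:
    (hνn : dIPM H μhat νn ≤ sInf ((fun ν => dIPM H μhat ν) '' G) + ε)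
    -- `ν_n*` attains the infimum of `d_H(μ̂_n, ·)` over `G`:
    (hstar_mem : νnstar ∈ G)
    (hstar : dIPM H μhat νnstar = sInf ((fun ν => dIPM H μhat ν) '' G))
    -- the empirical measure `ν̂_n` of `ν_n` used in training satisfies:
    (hhat : dIPM H μhat νn ≤ dIPM H μhat νhat) :
    dIPM H μ νn - sInf ((fun ν => dIPM H μ ν) '' G)
      ≤ 2 * dIPM H μ μhat + 2 * dIPM H νnstar νhat + ε := by
  have hps : IsProbabilityMeasure νnstar := hGprob _ hstar_mem
  have h1 : dIPM H μ νn ≤ dIPM H μ μhat + dIPM H μhat νn :=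
    dIPM_triangle hne hbdd μ μhat νn
  have h2 : dIPM H μhat νn ≤ dIPM H μhat νnstar + ε := by rw [hstar]; exact hνn
  have h3 : dIPM H μhat νnstar - dIPM H μ μhat ≤ sInf ((fun ν => dIPM H μ ν) '' G) := by
    apply le_csInf (hGne.image _)
    rintro b ⟨ν, hν, rfl⟩
    have : IsProbabilityMeasure ν := hGprob ν hν
    have hb : dIPM H μhat νnstar ≤ dIPM H μhat ν := by
      rw [hstar]
      refine csInf_le ⟨0, ?_⟩ ⟨ν, hν, rfl⟩
      rintro c ⟨ρ, hρ, rfl⟩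
      have : IsProbabilityMeasure ρ := hGprob ρ hρ
      exact dIPM_nonneg hne hbdd μhat ρ
    have htr : dIPM H μhat ν ≤ dIPM H μhat μ + dIPM H μ ν :=
      dIPM_triangle hne hbdd μhat μ ν
    have hsym : dIPM H μhat μ = dIPM H μ μhat := dIPM_symm μhat μ
    linarith
  have h4 : 0 ≤ dIPM H νnstar νhat := dIPM_nonneg hne hbdd νnstar νhat
  linarith
end

section
/- (PAC-Bayesian bound variant.) Let D be a distribution on X, F a hypothesis set with prior π and posterior ρ̂, loss φ : F × X → ℝ, population loss L_D(f) = E_{x∼D}[φ(f,x)] and empirical loss L̂_{D^n}(f) over an i.i.d. sample of size n. For any α > 0 and δ ∈ (0,1], with probability at least 1−δ over the draw of the sample, E_{f∼ρ̂}[L_D(f)] ≤ E_{f∼ρ̂}[L̂_{D^n}(f)] + (1/α)[KL(ρ̂‖π) + log(1/δ) + Ω(α,n)], where Ω(α,n) = log E_{f∼π} E_{D^n} exp{α(L_D(f) − L̂_{D^n}(f))}. -/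
open MeasureTheory

/-- PAC-Bayesian bound variant: for any `α > 0` and `δ ∈ (0,1]`, with probability at least
`1-δ` over the i.i.d. sample of size `n`,
`E_{f∼ρ̂}[L_D(f)] ≤ E_{f∼ρ̂}[L̂(f)] + (1/α)[KL(ρ̂‖π) + log(1/δ) + Ω(α,n)]` where
`Ω(α,n) = log E_{f∼π} E_{D^n} exp{α(L_D(f) − L̂(f))}`. -/
theorem stmt_5 {X F : Type*} [MeasurableSpace X] [MeasurableSpace F]
    (D : Measure X) [IsProbabilityMeasure D]
    (π ρ : Measure F) [IsProbabilityMeasure π] [IsProbabilityMeasure ρ]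
    (hac : ρ ≪ π)
    (φ : F → X → ℝ) (hφ : Measurable (Function.uncurry φ))
    (n : ℕ) (hn : 0 < n) (α : ℝ) (hα : 0 < α) (δ : ℝ) (hδ0 : 0 < δ) (hδ1 : δ ≤ 1)
    -- population and empirical losses
    (LD : F → ℝ) (hLD : LD = fun f => ∫ x, φ f x ∂D)
    (Lhat : F → (Fin n → X) → ℝ)
    (hLhat : Lhat = fun f xs => (∑ i, φ f (xs i)) / n)
    -- KL divergence and the log-moment term Ω(α,n)
    (KL Ωmom : ℝ)
    (hKL : KL = ∫ f, Real.log ((ρ.rnDeriv π f).toReal) ∂ρ)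
    (hΩ : Ωmom = Real.log (∫ f, ∫ xs, Real.exp (α * (LD f - Lhat f xs))
        ∂(Measure.pi fun _ : Fin n => D) ∂π))
    -- integrability assumptions (all exponential moments finite)
    (hint1 : Integrable LD ρ)
    (hint2 : ∀ xs : Fin n → X, Integrable (fun f => Lhat f xs) ρ)
    (hint3 : Integrable (fun f => Real.log ((ρ.rnDeriv π f).toReal)) ρ)
    (hint4 : Integrable (fun p : F × (Fin n → X) => Real.exp (α * (LD p.1 - Lhat p.1 p.2)))
        (π.prod (Measure.pi fun _ : Fin n => D))) :
    (Measure.pi fun _ : Fin n => D)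
      {xs | (∫ f, LD f ∂ρ)
        ≤ (∫ f, Lhat f xs ∂ρ) + (1 / α) * (KL + Real.log (1 / δ) + Ωmom)}
      ≥ ENNReal.ofReal (1 - δ) := by
  set ν : Measure (Fin n → X) := Measure.pi fun _ : Fin n => D with hν
  -- measurability facts
  have hLDm : Measurable LD := by
    rw [hLD]
    exact (hφ.stronglyMeasurable.integral_prod_right).measurable
  have hLhm : Measurable (fun p : F × (Fin n → X) => Lhat p.1 p.2) := by
    rw [hLhat]
    refine Measurable.div_const ?_ _
    refine Finset.measurable_sum _ fun i _ => ?_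
    exact hφ.comp (measurable_fst.prodMk ((measurable_pi_apply i).comp measurable_snd))
  have hGm : Measurable (fun p : F × (Fin n → X) => Real.exp (α * (LD p.1 - Lhat p.1 p.2))) :=
    (measurable_const.mul ((hLDm.comp measurable_fst).sub hLhm)).exp
  -- ξ : the inner π-integral, as a function of the sample
  set ξ : (Fin n → X) → ℝ := fun xs => ∫ f, Real.exp (α * (LD f - Lhat f xs)) ∂π with hξdef
  have hξm : Measurable ξ := by
    exact (hGm.stronglyMeasurable.integral_prod_left' (μ := π)).measurable
  -- total moment T
  set T : ℝ := ∫ f, ∫ xs, Real.exp (α * (LD f - Lhat f xs)) ∂ν ∂π with hT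
  have hΩT : Ωmom = Real.log T := hΩ
  have hTprod : T = ∫ p : F × (Fin n → X), Real.exp (α * (LD p.1 - Lhat p.1 p.2))
      ∂(π.prod ν) := (integral_prod _ hint4).symm
  haveI : NeZero (π.prod ν) := ⟨IsProbabilityMeasure.ne_zero _⟩
  have hTpos : 0 < T := by
    rw [hTprod]
    exact integral_exp_pos hint4
  have hEξ : ∫ xs, ξ xs ∂ν = T := by
    rw [hT]
    exact (integral_integral_swap hint4).symm
  have hξint : Integrable ξ ν := hint4.integral_prod_right
  have hξnonneg : 0 ≤ᵐ[ν] ξ :=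
    Filter.Eventually.of_forall fun xs =>
      integral_nonneg fun f => (Real.exp_pos _).le
  -- Markov's inequality
  set ε : ℝ := T / δ with hε
  have hεpos : 0 < ε := div_pos hTpos hδ0
  have hMarkov : ε * (ν {xs | ε ≤ ξ xs}).toReal ≤ T := by
    have := mul_meas_ge_le_integral_of_nonneg hξnonneg hξint ε
    rwa [hEξ] at this
  have hStoReal : (ν {xs | ε ≤ ξ xs}).toReal ≤ δ := by
    have h1 : (ν {xs | ε ≤ ξ xs}).toReal ≤ T / ε :=
      (le_div_iff₀' hεpos).mpr hMarkov
    have h2 : T / ε = δ := by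
      rw [hε]; field_simp
    linarith
  have hSmeas : MeasurableSet {xs | ε ≤ ξ xs} :=
    measurableSet_le measurable_const hξm
  have hSle : ν {xs | ε ≤ ξ xs} ≤ ENNReal.ofReal δ :=
    (ENNReal.le_ofReal_iff_toReal_le (measure_ne_top ν _) hδ0.le).mpr hStoReal
  have hcompl : ENNReal.ofReal (1 - δ) ≤ ν {xs | ε ≤ ξ xs}ᶜ := by
    rw [prob_compl_eq_one_sub hSmeas]
    calc ENNReal.ofReal (1 - δ) = ENNReal.ofReal 1 - ENNReal.ofReal δ :=
          ENNReal.ofReal_sub _ hδ0.le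
      _ = 1 - ENNReal.ofReal δ := by rw [ENNReal.ofReal_one]
      _ ≤ 1 - ν {xs | ε ≤ ξ xs} := tsub_le_tsub_left hSle 1
  -- the key pointwise (per-sample) bound
  have hkey : ∀ xs : Fin n → X,
      Integrable (fun f => Real.exp (α * (LD f - Lhat f xs))) π →
      ξ xs < ε →
      (∫ f, LD f ∂ρ) ≤ (∫ f, Lhat f xs ∂ρ)
        + (1 / α) * (KL + Real.log (1 / δ) + Ωmom) := by
    intro xs hGint hξlt
    set g : F → ℝ := fun f => α * (LD f - Lhat f xs) with hgdef
    set r : F → ℝ := fun f => (ρ.rnDeriv π f).toReal with hrdef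
    set h : F → ℝ := fun f => g f - Real.log (r f) with hhdef
    have hg_int : Integrable g ρ := (hint1.sub (hint2 xs)).const_mul α
    have hh_int : Integrable h ρ := hg_int.sub hint3
    have hr_meas : Measurable r := (Measure.measurable_rnDeriv ρ π).ennreal_toReal
    have hg_meas : Measurable g := by
      refine measurable_const.mul (hLDm.sub ?_)
      exact hLhm.comp (measurable_id.prodMk measurable_const)
    have hh_meas : Measurable h := hg_meas.sub hr_meas.log
    -- pointwise: r f * exp (h f) ≤ exp (g f)
    have hpt : ∀ f, r f * Real.exp (h f) ≤ Real.exp (g f) := by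
      intro f
      rcases eq_or_lt_of_le (ENNReal.toReal_nonneg : (0:ℝ) ≤ r f) with h0 | hpos
      · have hr0 : r f = 0 := h0.symm
        rw [hr0, zero_mul]; exact (Real.exp_pos _).le
      · have : Real.exp (h f) = Real.exp (g f) / r f := by
          rw [hhdef]
          simp only
          rw [Real.exp_sub, Real.exp_log hpos]
        rw [this, mul_div_cancel₀ _ hpos.ne']
    have hpt_nonneg : ∀ f, 0 ≤ r f * Real.exp (h f) := fun f =>
      mul_nonneg ENNReal.toReal_nonneg (Real.exp_pos _).le
    -- integrability of r • exp h under π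
    have hrexp_int : Integrable (fun f => r f • Real.exp (h f)) π := by
      simp only [smul_eq_mul]
      refine hGint.mono' ((hr_meas.mul hh_meas.exp).aestronglyMeasurable) ?_
      refine Filter.Eventually.of_forall fun f => ?_
      rw [Real.norm_of_nonneg (hpt_nonneg f)]
      exact hpt f
    have hexph_int : Integrable (fun f => Real.exp (h f)) ρ := by
      rw [← integrable_rnDeriv_smul_iff hac]
      exact hrexp_int
    -- Jensen's inequality for exp
    have hjen : Real.exp (∫ f, h f ∂ρ) ≤ ∫ f, Real.exp (h f) ∂ρ := by
      have := convexOn_exp.map_integral_le (μ := ρ) Real.continuous_exp.continuousOn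
        isClosed_univ (Filter.Eventually.of_forall fun f => Set.mem_univ _) hh_int
        (by exact hexph_int)
      exact this
    -- change of measure
    have hcm : ∫ f, Real.exp (h f) ∂ρ = ∫ f, r f • Real.exp (h f) ∂π :=
      (integral_rnDeriv_smul hac).symm
    have hbound : ∫ f, r f • Real.exp (h f) ∂π ≤ ξ xs := by
      refine integral_mono hrexp_int hGint fun f => ?_
      simpa [smul_eq_mul] using hpt f
    have hchain : Real.exp (∫ f, h f ∂ρ) ≤ ξ xs := by
      calc Real.exp (∫ f, h f ∂ρ) ≤ ∫ f, Real.exp (h f) ∂ρ := hjen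
        _ = ∫ f, r f • Real.exp (h f) ∂π := hcm
        _ ≤ ξ xs := hbound
    have hξpos : 0 < ξ xs := lt_of_lt_of_le (Real.exp_pos _) hchain
    have hlog1 : ∫ f, h f ∂ρ ≤ Real.log (ξ xs) :=
      (Real.le_log_iff_exp_le hξpos).mpr hchain
    have hlog2 : Real.log (ξ xs) ≤ Ωmom + Real.log (1 / δ) := by
      have h1 : Real.log (ξ xs) ≤ Real.log ε := Real.log_le_log hξpos hξlt.le
      have h2 : Real.log ε = Real.log T - Real.log δ :=
        Real.log_div hTpos.ne' hδ0.ne'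
      rw [hΩT, one_div, Real.log_inv]
      linarith
    -- compute ∫ h dρ
    have hinth : ∫ f, h f ∂ρ = α * ((∫ f, LD f ∂ρ) - ∫ f, Lhat f xs ∂ρ) - KL := by
      rw [hhdef]
      rw [integral_sub hg_int hint3, ← hKL, hgdef]
      simp only
      rw [integral_const_mul, integral_sub hint1 (hint2 xs)]
    set A : ℝ := ∫ f, LD f ∂ρ
    set B : ℝ := ∫ f, Lhat f xs ∂ρ
    have hfin : α * (A - B) ≤ KL + Real.log (1 / δ) + Ωmom := by
      rw [hinth] at hlog1
      linarith
    have h3 : (1 / α) * (α * (A - B)) ≤ (1 / α) * (KL + Real.log (1 / δ) + Ωmom) :=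
      mul_le_mul_of_nonneg_left hfin (by positivity)
    rw [← mul_assoc, one_div_mul_cancel hα.ne', one_mul] at h3
    linarith
  -- conclude
  refine le_trans hcompl (measure_mono_ae ?_)
  filter_upwards [hint4.prod_left_ae] with xs hGint hmem
  exact hkey xs hGint (lt_of_not_ge hmem)
end
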